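/- arXiv:2410.21654 — 4 statements merged into one kernel-verified Lean document; each statement's English description precedes it below -/
import Mathlib

section
/- Let A be a Hopf algebra over a field F with bijective antipode S, quasitriangular with R-matrix R, with a sovereign element D and a balance b. Then (Ad(D), (R₂₁)⁻¹) is a twist pair for A and b⁻¹ is a boundary gauge transformation for (Ad(D), (R₂₁)⁻¹), where Ad(D)(a) = D·a·D⁻¹. -/
open TensorProduct

noncomputable section

variable (F : Type*) [Field F]

section BialgDefs

variable (A : Type*) [Ring A] [Bialgebra F A]

/-- Conjugation by an invertible element, as an algebra automorphism. -/
def conjEquiv (g gi : A) (h1 : g * gi = 1) (h2 : gi * g = 1) : A ≃ₐ[F] A where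
  toFun a := g * a * gi
  invFun a := gi * a * g
  left_inv a := by simp only [← mul_assoc]; rw [h2, one_mul, mul_assoc, h2, mul_one]
  right_inv a := by simp only [← mul_assoc]; rw [h1, one_mul, mul_assoc, h1, mul_one]
  map_mul' a b := by
    show g * (a * b) * gi = (g * a * gi) * (g * b * gi)
    simp only [mul_assoc]; rw [← mul_assoc gi g, h2, one_mul]
  map_add' a b := by
    show g * (a + b) * gi = g * a * gi + g * b * gi
    rw [mul_add, add_mul]
  commutes' r := by
    show g * algebraMap F A r * gi = algebraMap F A r
    rw [← Algebra.commutes r g, mul_assoc, h1, mul_one]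

/-- The coproduct of `A`, as an algebra map. -/
def cop : A →ₐ[F] A ⊗[F] A := Bialgebra.comulAlgHom F A

/-- The flip of the two tensor legs. -/
def flipT : (A ⊗[F] A) ≃ₐ[F] A ⊗[F] A := Algebra.TensorProduct.comm F A A

/-- The opposite coproduct. -/
def copOp : A →ₐ[F] A ⊗[F] A := (flipT F A).toAlgHom.comp (cop F A)

/-- `X ↦ X₁₂` on triple tensors. -/
def i12 : (A ⊗[F] A) →ₐ[F] A ⊗[F] (A ⊗[F] A) :=
  Algebra.TensorProduct.map (AlgHom.id F A) Algebra.TensorProduct.includeLeft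

/-- `X ↦ X₁₃` on triple tensors. -/
def i13 : (A ⊗[F] A) →ₐ[F] A ⊗[F] (A ⊗[F] A) :=
  Algebra.TensorProduct.map (AlgHom.id F A) Algebra.TensorProduct.includeRight

/-- `X ↦ X₂₃` on triple tensors. -/
def i23 : (A ⊗[F] A) →ₐ[F] A ⊗[F] (A ⊗[F] A) :=
  Algebra.TensorProduct.includeRight

/-- `Δ ⊗ id` landing in `A ⊗ (A ⊗ A)`. -/
def cop12 : (A ⊗[F] A) →ₐ[F] A ⊗[F] (A ⊗[F] A) :=
  (Algebra.TensorProduct.assoc F F F A A A).toAlgHom.comp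
    (Algebra.TensorProduct.map (cop F A) (AlgHom.id F A))

/-- `id ⊗ Δ`. -/
def cop23 : (A ⊗[F] A) →ₐ[F] A ⊗[F] (A ⊗[F] A) :=
  Algebra.TensorProduct.map (AlgHom.id F A) (cop F A)

/-- `ε ⊗ id`. -/
def counit2l : (A ⊗[F] A) →ₐ[F] A :=
  (Algebra.TensorProduct.lid F A).toAlgHom.comp
    (Algebra.TensorProduct.map (Bialgebra.counitAlgHom F A) (AlgHom.id F A))

/-- `id ⊗ ε`. -/
def counit2r : (A ⊗[F] A) →ₐ[F] A :=
  (Algebra.TensorProduct.rid F F A).toAlgHom.comp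
    (Algebra.TensorProduct.map (AlgHom.id F A) (Bialgebra.counitAlgHom F A))

/-- `ψ ⊗ φ` on `A ⊗ A`. -/
def mapT (ψ φ : A →ₐ[F] A) : (A ⊗[F] A) →ₐ[F] A ⊗[F] A := Algebra.TensorProduct.map ψ φ

/-- `R^ψ = (ψ ⊗ id)(R)`. -/
def rpsi (R : A ⊗[F] A) (ψ : A ≃ₐ[F] A) : A ⊗[F] A :=
  Algebra.TensorProduct.map ψ.toAlgHom (AlgHom.id F A) R

/-- `A` is quasitriangular with R-matrix `R` (with inverse `Ri`). -/
structure IsQT (R Ri : A ⊗[F] A) : Prop where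
  mulInv : R * Ri = 1
  invMul : Ri * R = 1
  intw : ∀ a : A, R * cop F A a * Ri = copOp F A a
  copL : cop12 F A R = i13 F A R * i23 F A R
  copR : cop23 F A R = i13 F A R * i12 F A R

/-- `(ψ, J)` is a twist pair (with `Ji` the inverse of `J`). -/
structure IsTwistPair (R Ri J Ji : A ⊗[F] A) (ψ : A ≃ₐ[F] A) : Prop where
  mulInv : J * Ji = 1
  invMul : Ji * J = 1
  cocycle : i12 F A J * cop12 F A J = i23 F A J * cop23 F A J
  counitL : counit2l F A J = 1
  counitR : counit2r F A J = 1
  intw : ∀ a : A,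
    mapT F A ψ.toAlgHom ψ.toAlgHom (copOp F A (ψ.symm a)) = J * cop F A a * Ji
  rrel : flipT F A (mapT F A ψ.toAlgHom ψ.toAlgHom R) = flipT F A J * R * Ji

/-- The image of `s ⊗ A` inside `A ⊗ A`, for a subset `s ⊆ A`. -/
def legSpan (s : Set A) : Submodule F (A ⊗[F] A) :=
  Submodule.span F {x : A ⊗[F] A | ∃ b ∈ s, ∃ a : A, x = b ⊗ₜ[F] a}

/-- `B` is a right coideal subalgebra of `A`. -/
def IsRightCoideal (B : Subalgebra F A) : Prop :=
  ∀ b ∈ B, cop F A b ∈ legSpan F A (B : Set A)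

/-- The tensor K-matrix `𝕂 = (R^ψ)₂₁ ⬝ (1 ⊗ K) ⬝ R`. -/
def tenK (R : A ⊗[F] A) (ψ : A ≃ₐ[F] A) (K : A) : A ⊗[F] A :=
  flipT F A (rpsi F A R ψ) * ((1 : A) ⊗ₜ[F] K) * R

/-- `(ψ, J, K)` is a cylindrical structure on `(A, B)`. -/
structure IsCylindrical (R Ri : A ⊗[F] A) (B : Subalgebra F A) (J Ji : A ⊗[F] A)
    (ψ : A ≃ₐ[F] A) (K Kinv : A) : Prop where
  twist : IsTwistPair F A R Ri J Ji ψ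
  kMulInv : K * Kinv = 1
  kInvMul : Kinv * K = 1
  intwB : ∀ b ∈ B, K * b * Kinv = ψ b
  support : tenK F A R ψ K ∈ legSpan F A (B : Set A)
  copK : cop F A K = Ji * (((1 : A) ⊗ₜ[F] K) * (rpsi F A R ψ * (K ⊗ₜ[F] (1 : A))))

end BialgDefs

section ModuleDefs

variable (A : Type*) [Ring A] [Bialgebra F A]

/-- Right partial transpose on `End V ⊗ End W`. -/
def pt2 (V W : Type*) [AddCommGroup V] [Module F V] [AddCommGroup W] [Module F W] :
    (Module.End F V ⊗[F] Module.End F W) →ₗ[F]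
      (Module.End F V ⊗[F] Module.End F (Module.Dual F W)) :=
  TensorProduct.map LinearMap.id (Module.Dual.transpose (R := F) (M := W) (M' := W))

/-- Identification `End V ⊗ End (W^∨∨) ≃ End V ⊗ End W` via the canonical iso `W ≅ W^∨∨`. -/
def ddIdent (V W : Type*) [AddCommGroup V] [Module F V] [AddCommGroup W] [Module F W]
    [FiniteDimensional F W] :
    (Module.End F V ⊗[F] Module.End F (Module.Dual F (Module.Dual F W))) →ₗ[F]
      (Module.End F V ⊗[F] Module.End F W) :=
  TensorProduct.map LinearMap.id ((Module.evalEquiv F W).conj.symm).toLinearMap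

/-- The right partial trace `A ⊗ End V → A`. -/
def trace2 (V : Type*) [AddCommGroup V] [Module F V] :
    (A ⊗[F] Module.End F V) →ₗ[F] A :=
  (TensorProduct.rid F A).toLinearMap.comp
    (TensorProduct.map LinearMap.id (LinearMap.trace F V))

/-- `T_{•,V}`: act with the second leg on `V`. -/
def actRight (V : Type*) [AddCommGroup V] [Module F V] (ρV : A →ₐ[F] Module.End F V) :
    (A ⊗[F] A) →ₐ[F] A ⊗[F] Module.End F V :=
  Algebra.TensorProduct.map (AlgHom.id F A) ρV

/-- The boundary transfer matrix `Tr₂(𝕂₍•,V₎)`. -/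
def transfer (V : Type*) [AddCommGroup V] [Module F V] (ρV : A →ₐ[F] Module.End F V)
    (T : A ⊗[F] A) : A :=
  trace2 F A V (actRight F A V ρV T)

/-- The module structure on `V ⊗ W` obtained from `Δ`. -/
def tensorRep (V W : Type*) [AddCommGroup V] [Module F V] [AddCommGroup W] [Module F W]
    (ρV : A →ₐ[F] Module.End F V) (ρW : A →ₐ[F] Module.End F W) :
    A →ₐ[F] Module.End F (V ⊗[F] W) :=
  (Module.endTensorEndAlgHom (R := F) (S := F) (A := F) (M := V) (N := W)).comp
    ((Algebra.TensorProduct.map ρV ρW).comp (cop F A))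

/-- `g` (with inverse `gi`) is a boundary gauge transformation for the twist pair `(ψ, J)`. -/
def IsBoundaryGauge (R J : A ⊗[F] A) (ψ : A ≃ₐ[F] A) (g gi : A)
    (hg1 : g * gi = 1) (hg2 : gi * g = 1) : Prop :=
  ∀ (V W : Type) [AddCommGroup V] [Module F V] [FiniteDimensional F V]
    [AddCommGroup W] [Module F W] [FiniteDimensional F W]
    (ρV : A →ₐ[F] Module.End F V) (ρW : A →ₐ[F] Module.End F W),
    let X := pt2 F V W
      ((Algebra.TensorProduct.map
        (ρV.comp (ψ.trans (conjEquiv F A g gi hg1 hg2)).toAlgHom) ρW) R)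
    IsUnit X ∧ IsUnit (pt2 F V (Module.Dual F W) (Ring.inverse X)) ∧
      (Algebra.TensorProduct.map ρV ρW) ((g ⊗ₜ[F] g) * J * cop F A gi) =
        ddIdent F V W (Ring.inverse (pt2 F V (Module.Dual F W) (Ring.inverse X)))

end ModuleDefs

/-!
Write `J = R₂₁⁻¹`. Since `Δ(D) = D ⊗ D = Δᵒᵖ(D)`, the element `D ⊗ D` commutes with `R`, so
`Ad(D) ⊗ Ad(D)` fixes `R`, and conjugating `Δᵒᵖ` by the grouplike `D` changes nothing; flipping
`R Δ R⁻¹ = Δᵒᵖ` shows that `J` conjugates `Δ` into `Δᵒᵖ`. Permuting legs in the hexagon axioms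
gives `(Δ ⊗ id)(R₂₁) = (R₂₁)₂₃ (R₂₁)₁₃` and `(id ⊗ Δ)(R₂₁) = (R₂₁)₁₂ (R₂₁)₁₃`, so the cocycle
identity for `J` is the inverse of the Yang–Baxter equation for `R₂₁`.

For the gauge `g = b⁻¹`, centrality of `b` gives `ψᵍ = Ad(D) = S²`. The antipode axiom on the
first leg of the hexagon axioms gives `(S ⊗ id)(R) = R⁻¹`, and shows that `(S ⊗ id)(R⁻¹)` is
inverse to `R⁻¹` in `A ⊗ Aᵐᵒᵖ`. The partial transpose reverses products in the second leg, so
`((R^{S²})^{t₂})⁻¹ = (R⁻¹)^{t₂}`; transposing twice more is multiplicative and returns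
`R_{V,W}`. Finally the balance `Δ(b) = (b ⊗ b) R₂₁ R` gives `(g ⊗ g) J Δ(g)⁻¹ = R`.
-/

namespace TensorLegs

open Algebra.TensorProduct

variable {F} {A : Type*} [Ring A]

section Algebra

variable [Algebra F A]

def mulRightOp (u v : A ⊗[F] A) : A ⊗[F] A :=
  let e := TensorProduct.congr (LinearEquiv.refl F A) (MulOpposite.opLinearEquiv F)
  e.symm (e u * e v)

@[simp] lemma mulRightOp_tmul (a b c d : A) :
    mulRightOp (a ⊗ₜ[F] b) (c ⊗ₜ d) = (a * c) ⊗ₜ (d * b) := by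
  simp [mulRightOp, ← MulOpposite.op_mul]

@[simp] lemma zero_mulRightOp (v : A ⊗[F] A) : mulRightOp 0 v = 0 := by simp [mulRightOp]

@[simp] lemma mulRightOp_zero (u : A ⊗[F] A) : mulRightOp u 0 = 0 := by simp [mulRightOp]

lemma add_mulRightOp (u u' v : A ⊗[F] A) :
    mulRightOp (u + u') v = mulRightOp u v + mulRightOp u' v := by
  simp [mulRightOp, add_mul]

lemma mulRightOp_add (u v v' : A ⊗[F] A) :
    mulRightOp u (v + v') = mulRightOp u v + mulRightOp u v' := by
  simp [mulRightOp, mul_add]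

lemma tmul_self_mul_comm {c : A} (hc : ∀ a : A, c * a = a * c) (u : A ⊗[F] A) :
    (c ⊗ₜ c) * u = u * (c ⊗ₜ c) := by
  induction u using TensorProduct.induction_on <;> simp_all [mul_add, add_mul]

lemma map_id_eq_rTensor {f : A →ₐ[F] A} {g : A →ₗ[F] A} (h : ∀ x, f x = g x)
    (u : A ⊗[F] A) : map f (AlgHom.id F A) u = g.rTensor A u := by
  induction u using TensorProduct.induction_on <;> simp_all

lemma map_comp_left_apply {B C D : Type*} [Semiring B] [Algebra F B] [Semiring C]
    [Algebra F C] [Semiring D] [Algebra F D] (f : B →ₐ[F] C) (g : A →ₐ[F] B) (h : A →ₐ[F] D)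
    (u : A ⊗[F] A) : map (f.comp g) h u = map f h (map g (AlgHom.id F A) u) := by
  induction u using TensorProduct.induction_on <;> simp_all

end Algebra

section Bialgebra

variable [Bialgebra F A]

section

variable (F A)

def swap12 : A ⊗[F] (A ⊗[F] A) ≃ₐ[F] A ⊗[F] (A ⊗[F] A) := leftComm F A A A

def swap23 : A ⊗[F] (A ⊗[F] A) ≃ₐ[F] A ⊗[F] (A ⊗[F] A) :=
  Algebra.TensorProduct.congr AlgEquiv.refl (Algebra.TensorProduct.comm F A A)

def swap13 : A ⊗[F] (A ⊗[F] A) ≃ₐ[F] A ⊗[F] (A ⊗[F] A) :=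
  ((swap23 F A).trans (swap12 F A)).trans (swap23 F A)

def rotateLeft : A ⊗[F] (A ⊗[F] A) ≃ₐ[F] A ⊗[F] (A ⊗[F] A) := (swap12 F A).trans (swap23 F A)

def rotateRight : A ⊗[F] (A ⊗[F] A) ≃ₐ[F] A ⊗[F] (A ⊗[F] A) := (swap23 F A).trans (swap12 F A)

def counitLeft3 : A ⊗[F] (A ⊗[F] A) →ₐ[F] A ⊗[F] A :=
  (Algebra.TensorProduct.lid F (A ⊗[F] A)).toAlgHom.comp
    (Algebra.TensorProduct.map (Bialgebra.counitAlgHom F A) (AlgHom.id F (A ⊗[F] A)))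

def counitRight3 : A ⊗[F] (A ⊗[F] A) →ₐ[F] A ⊗[F] A :=
  Algebra.TensorProduct.map (AlgHom.id F A) (counit2r F A)

end

@[simp] lemma swap12_tmul (x y z : A) : swap12 F A (x ⊗ₜ (y ⊗ₜ z)) = y ⊗ₜ (x ⊗ₜ z) := rfl
@[simp] lemma swap23_tmul (x y z : A) : swap23 F A (x ⊗ₜ (y ⊗ₜ z)) = x ⊗ₜ (z ⊗ₜ y) := rfl
@[simp] lemma swap13_tmul (x y z : A) : swap13 F A (x ⊗ₜ (y ⊗ₜ z)) = z ⊗ₜ (y ⊗ₜ x) := rfl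
@[simp] lemma rotateLeft_tmul (x y z : A) : rotateLeft F A (x ⊗ₜ (y ⊗ₜ z)) = y ⊗ₜ (z ⊗ₜ x) := rfl
@[simp] lemma rotateRight_tmul (x y z : A) :
    rotateRight F A (x ⊗ₜ (y ⊗ₜ z)) = z ⊗ₜ (x ⊗ₜ y) := rfl

@[simp] lemma flipT_tmul (x y : A) : flipT F A (x ⊗ₜ y) = y ⊗ₜ x := rfl
@[simp] lemma i12_tmul (x y : A) : i12 F A (x ⊗ₜ y) = x ⊗ₜ (y ⊗ₜ 1) := rfl
@[simp] lemma i13_tmul (x y : A) : i13 F A (x ⊗ₜ y) = x ⊗ₜ (1 ⊗ₜ y) := rfl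
@[simp] lemma i23_apply (u : A ⊗[F] A) : i23 F A u = 1 ⊗ₜ u := rfl
@[simp] lemma cop12_tmul (x y : A) :
    cop12 F A (x ⊗ₜ y) = Algebra.TensorProduct.assoc F F F A A A (cop F A x ⊗ₜ y) := rfl
@[simp] lemma cop23_tmul (x y : A) : cop23 F A (x ⊗ₜ y) = x ⊗ₜ cop F A y := rfl
@[simp] lemma counit2l_tmul (x y : A) :
    counit2l F A (x ⊗ₜ y) = Bialgebra.counitAlgHom F A x • y := by simp [counit2l]
@[simp] lemma counit2r_tmul (x y : A) :
    counit2r F A (x ⊗ₜ y) = Bialgebra.counitAlgHom F A y • x := by simp [counit2r]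
@[simp] lemma copOp_apply (x : A) : copOp F A x = flipT F A (cop F A x) := rfl

@[simp] lemma flipT_flipT (u : A ⊗[F] A) : flipT F A (flipT F A u) = u :=
  (Algebra.TensorProduct.comm F A A).symm_apply_apply u

lemma swap12_i13 (u : A ⊗[F] A) : swap12 F A (i13 F A u) = i23 F A u := by
  induction u using TensorProduct.induction_on <;> simp_all [tmul_add]

lemma swap12_i23 (u : A ⊗[F] A) : swap12 F A (i23 F A u) = i13 F A u := by
  induction u using TensorProduct.induction_on <;> simp_all [tmul_add]

lemma swap13_i12 (u : A ⊗[F] A) : swap13 F A (i12 F A u) = i23 F A (flipT F A u) := by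
  induction u using TensorProduct.induction_on <;> simp_all [tmul_add]

lemma swap13_i13 (u : A ⊗[F] A) : swap13 F A (i13 F A u) = i13 F A (flipT F A u) := by
  induction u using TensorProduct.induction_on <;> simp_all

lemma swap13_i23 (u : A ⊗[F] A) : swap13 F A (i23 F A u) = i12 F A (flipT F A u) := by
  induction u using TensorProduct.induction_on <;> simp_all [tmul_add]

lemma rotateLeft_i12 (u : A ⊗[F] A) : rotateLeft F A (i12 F A u) = i13 F A (flipT F A u) := by
  induction u using TensorProduct.induction_on <;> simp_all

lemma rotateLeft_i13 (u : A ⊗[F] A) : rotateLeft F A (i13 F A u) = i23 F A (flipT F A u) := by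
  induction u using TensorProduct.induction_on <;> simp_all [tmul_add]

lemma rotateRight_i13 (u : A ⊗[F] A) : rotateRight F A (i13 F A u) = i12 F A (flipT F A u) := by
  induction u using TensorProduct.induction_on <;> simp_all

lemma rotateRight_i23 (u : A ⊗[F] A) : rotateRight F A (i23 F A u) = i13 F A (flipT F A u) := by
  induction u using TensorProduct.induction_on <;> simp_all [tmul_add]

lemma i12_eq_assoc (u : A ⊗[F] A) :
    i12 F A u = Algebra.TensorProduct.assoc F F F A A A (u ⊗ₜ 1) := by
  induction u using TensorProduct.induction_on <;> simp_all [add_tmul]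

lemma swap12_assoc (w : A ⊗[F] A) (y : A) :
    swap12 F A (Algebra.TensorProduct.assoc F F F A A A (w ⊗ₜ y)) =
      Algebra.TensorProduct.assoc F F F A A A (flipT F A w ⊗ₜ y) := by
  induction w using TensorProduct.induction_on <;> simp_all [add_tmul]

lemma rotateLeft_tmul_eq_assoc (x : A) (w : A ⊗[F] A) :
    rotateLeft F A (x ⊗ₜ w) = Algebra.TensorProduct.assoc F F F A A A (w ⊗ₜ x) := by
  induction w using TensorProduct.induction_on <;> simp_all [tmul_add, add_tmul]

lemma rotateRight_assoc (w : A ⊗[F] A) (y : A) :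
    rotateRight F A (Algebra.TensorProduct.assoc F F F A A A (w ⊗ₜ y)) = y ⊗ₜ w := by
  induction w using TensorProduct.induction_on <;> simp_all [tmul_add, add_tmul]

lemma rotateLeft_cop23 (u : A ⊗[F] A) : rotateLeft F A (cop23 F A u) = cop12 F A (flipT F A u) := by
  induction u using TensorProduct.induction_on <;> simp_all [rotateLeft_tmul_eq_assoc]

lemma rotateRight_cop12 (u : A ⊗[F] A) :
    rotateRight F A (cop12 F A u) = cop23 F A (flipT F A u) := by
  induction u using TensorProduct.induction_on <;> simp_all [rotateRight_assoc]

lemma counit2l_cop (x : A) : counit2l F A (cop F A x) = x := by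
  have h (w : A ⊗[F] A) :
      counit2l F A w = TensorProduct.lid F A (Coalgebra.counit.rTensor A w) := by
    induction w using TensorProduct.induction_on <;> simp_all
  rw [h, cop, Bialgebra.comulAlgHom_apply, Coalgebra.rTensor_counit_comul]
  simp

lemma counit2r_cop (x : A) : counit2r F A (cop F A x) = x := by
  have h (w : A ⊗[F] A) :
      counit2r F A w = TensorProduct.rid F A (Coalgebra.counit.lTensor A w) := by
    induction w using TensorProduct.induction_on <;> simp_all
  rw [h, cop, Bialgebra.comulAlgHom_apply, Coalgebra.lTensor_counit_comul]
  simp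

lemma counit2l_flipT (u : A ⊗[F] A) : counit2l F A (flipT F A u) = counit2r F A u := by
  induction u using TensorProduct.induction_on <;> simp_all

lemma counit2r_flipT (u : A ⊗[F] A) : counit2r F A (flipT F A u) = counit2l F A u := by
  induction u using TensorProduct.induction_on <;> simp_all

@[simp] lemma counitLeft3_tmul (x : A) (w : A ⊗[F] A) :
    counitLeft3 F A (x ⊗ₜ w) = Bialgebra.counitAlgHom F A x • w := by
  simp [counitLeft3]

@[simp] lemma counitRight3_tmul (x : A) (w : A ⊗[F] A) :
    counitRight3 F A (x ⊗ₜ w) = x ⊗ₜ counit2r F A w := rfl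

lemma counitLeft3_cop12 (u : A ⊗[F] A) : counitLeft3 F A (cop12 F A u) = u := by
  have h (w : A ⊗[F] A) (y : A) : counitLeft3 F A (Algebra.TensorProduct.assoc F F F A A A
      (w ⊗ₜ y)) = counit2l F A w ⊗ₜ y := by
    induction w using TensorProduct.induction_on <;> simp_all [add_tmul, smul_tmul']
  induction u using TensorProduct.induction_on <;> simp_all [counit2l_cop]

lemma counitLeft3_i13 (u : A ⊗[F] A) : counitLeft3 F A (i13 F A u) = 1 ⊗ₜ counit2l F A u := by
  induction u using TensorProduct.induction_on <;> simp_all [tmul_add]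

lemma counitLeft3_i23 (u : A ⊗[F] A) : counitLeft3 F A (i23 F A u) = u := by
  simp

lemma counitRight3_cop23 (u : A ⊗[F] A) : counitRight3 F A (cop23 F A u) = u := by
  induction u using TensorProduct.induction_on <;> simp_all [counit2r_cop]

lemma counitRight3_i13 (u : A ⊗[F] A) : counitRight3 F A (i13 F A u) = counit2r F A u ⊗ₜ 1 := by
  induction u using TensorProduct.induction_on <;> simp_all [add_tmul, smul_tmul']

lemma counitRight3_i12 (u : A ⊗[F] A) : counitRight3 F A (i12 F A u) = u := by
  induction u using TensorProduct.induction_on <;> simp_all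

lemma mapT_conjEquiv (g gi : A) (h1 : g * gi = 1) (h2 : gi * g = 1) (u : A ⊗[F] A) :
    mapT F A (conjEquiv F A g gi h1 h2).toAlgHom (conjEquiv F A g gi h1 h2).toAlgHom u =
      (g ⊗ₜ g) * u * (gi ⊗ₜ gi) := by
  induction u using TensorProduct.induction_on with
  | zero => simp
  | tmul x y => rw [tmul_mul_tmul, tmul_mul_tmul]; rfl
  | add x y hx hy => rw [map_add, hx, hy, mul_add, add_mul]

lemma cop_inv_of_grouplike {D Di : A} (hD1 : D * Di = 1) (hD2 : Di * D = 1)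
    (hDgl : cop F A D = D ⊗ₜ D) : cop F A Di = Di ⊗ₜ Di := by
  refine (left_inv_eq_right_inv (a := cop F A D) ?_ ?_).symm
  · rw [hDgl, tmul_mul_tmul, hD2, one_def]
  · rw [← map_mul, hD1, map_one]

lemma copOp_conj_of_grouplike {D Di : A} (hD1 : D * Di = 1) (hD2 : Di * D = 1)
    (hDgl : cop F A D = D ⊗ₜ D) (a : A) :
    copOp F A (Di * a * D) = (Di ⊗ₜ Di) * copOp F A a * (D ⊗ₜ D) := by
  simp only [copOp_apply, map_mul, cop_inv_of_grouplike hD1 hD2 hDgl, hDgl, flipT_tmul]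

end Bialgebra

section Hopf

variable [HopfAlgebra F A]

section

variable (F A)

def antipodeMul12 : A ⊗[F] (A ⊗[F] A) →ₗ[F] A ⊗[F] A :=
  (LinearMap.mul' F A).rTensor A ∘ₗ (TensorProduct.assoc F A A A).symm.toLinearMap ∘ₗ
    (HopfAlgebra.antipode F).rTensor (A ⊗[F] A)

def mulAntipode12 : A ⊗[F] (A ⊗[F] A) →ₗ[F] A ⊗[F] A :=
  (LinearMap.mul' F A).rTensor A ∘ₗ (TensorProduct.assoc F A A A).symm.toLinearMap ∘ₗ
    ((HopfAlgebra.antipode F).rTensor A).lTensor A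

end

@[simp] lemma antipodeMul12_tmul (x y z : A) :
    antipodeMul12 F A (x ⊗ₜ (y ⊗ₜ z)) = (HopfAlgebra.antipode F x * y) ⊗ₜ z := by
  simp [antipodeMul12]

@[simp] lemma mulAntipode12_tmul (x y z : A) :
    mulAntipode12 F A (x ⊗ₜ (y ⊗ₜ z)) = (x * HopfAlgebra.antipode F y) ⊗ₜ z := by
  simp [mulAntipode12]

lemma antipodeMul12_cop12 (u : A ⊗[F] A) :
    antipodeMul12 F A (cop12 F A u) = 1 ⊗ₜ counit2l F A u := by
  have h (w : A ⊗[F] A) (y : A) :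
      antipodeMul12 F A (Algebra.TensorProduct.assoc F F F A A A (w ⊗ₜ y)) =
        LinearMap.mul' F A ((HopfAlgebra.antipode F).rTensor A w) ⊗ₜ y := by
    induction w using TensorProduct.induction_on <;> simp_all [add_tmul]
  induction u using TensorProduct.induction_on with
  | zero => simp
  | tmul x y =>
    rw [cop12_tmul, h, show cop F A x = Coalgebra.comul x from rfl,
      HopfAlgebra.mul_antipode_rTensor_comul_apply, counit2l_tmul, Algebra.algebraMap_eq_smul_one,
      smul_tmul]
    rfl
  | add x y hx hy => rw [map_add, map_add, hx, hy, map_add, tmul_add]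

lemma mulAntipode12_cop12 (u : A ⊗[F] A) :
    mulAntipode12 F A (cop12 F A u) = 1 ⊗ₜ counit2l F A u := by
  have h (w : A ⊗[F] A) (y : A) :
      mulAntipode12 F A (Algebra.TensorProduct.assoc F F F A A A (w ⊗ₜ y)) =
        LinearMap.mul' F A ((HopfAlgebra.antipode F).lTensor A w) ⊗ₜ y := by
    induction w using TensorProduct.induction_on <;> simp_all [add_tmul]
  induction u using TensorProduct.induction_on with
  | zero => simp
  | tmul x y =>
    rw [cop12_tmul, h, show cop F A x = Coalgebra.comul x from rfl,
      HopfAlgebra.mul_antipode_lTensor_comul_apply, counit2l_tmul, Algebra.algebraMap_eq_smul_one,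
      smul_tmul]
    rfl
  | add x y hx hy => rw [map_add, map_add, hx, hy, map_add, tmul_add]

lemma antipodeMul12_i13_mul_i23 (u v : A ⊗[F] A) :
    antipodeMul12 F A (i13 F A u * i23 F A v) = (HopfAlgebra.antipode F).rTensor A u * v := by
  induction u using TensorProduct.induction_on with
  | add x y hx hy => simp_all [add_mul]
  | _ => induction v using TensorProduct.induction_on <;> simp_all [tmul_add, mul_add]

lemma antipodeMul12_i23_mul_i13 (u v : A ⊗[F] A) :
    antipodeMul12 F A (i23 F A u * i13 F A v) =
      mulRightOp ((HopfAlgebra.antipode F).rTensor A v) u := by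
  induction u using TensorProduct.induction_on with
  | add x y hx hy => simp_all [tmul_add, add_mul, mulRightOp_add]
  | _ => induction v using TensorProduct.induction_on <;>
      simp_all [mul_add, add_mulRightOp]

lemma mulAntipode12_i23_mul_i13 (u v : A ⊗[F] A) :
    mulAntipode12 F A (i23 F A u * i13 F A v) =
      mulRightOp v ((HopfAlgebra.antipode F).rTensor A u) := by
  induction u using TensorProduct.induction_on with
  | add x y hx hy => simp_all [tmul_add, add_mul, mulRightOp_add]
  | _ => induction v using TensorProduct.induction_on <;>
      simp_all [mul_add, add_mulRightOp]

end Hopf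

end TensorLegs

namespace PartialTranspose

open Algebra.TensorProduct TensorLegs

variable {F} {V W : Type*} [AddCommGroup V] [Module F V] [AddCommGroup W] [Module F W]

@[simp] lemma pt2_tmul (f : Module.End F V) (g : Module.End F W) :
    pt2 F V W (f ⊗ₜ g) = f ⊗ₜ Module.Dual.transpose (R := F) g := rfl

lemma transpose_one : Module.Dual.transpose (R := F) (1 : Module.End F W) = 1 := rfl

lemma transpose_mul (g h : Module.End F W) :
    Module.Dual.transpose (R := F) g * Module.Dual.transpose (R := F) h =
      Module.Dual.transpose (R := F) (h * g) :=
  (Module.Dual.transpose_comp h g).symm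

lemma transpose_transpose [FiniteDimensional F W] (g : Module.End F W) :
    Module.Dual.transpose (R := F) (Module.Dual.transpose (R := F) g) =
      (Module.evalEquiv F W).conj g := by
  rw [LinearEquiv.conj_apply, Module.evalEquiv_toLinearMap]
  exact (Module.Dual.eval_comp_comp_evalEquiv_eq F W).symm

lemma pt2_one : pt2 F V W 1 = 1 := by
  rw [one_def, pt2_tmul, transpose_one]
  rfl

lemma pt2_pt2_mul (P Q : Module.End F V ⊗[F] Module.End F W) :
    pt2 F V (Module.Dual F W) (pt2 F V W (P * Q)) =
      pt2 F V (Module.Dual F W) (pt2 F V W P) * pt2 F V (Module.Dual F W) (pt2 F V W Q) := by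
  induction P using TensorProduct.induction_on with
  | add x y hx hy => simp_all [add_mul]
  | _ => induction Q using TensorProduct.induction_on <;> simp_all [mul_add, transpose_mul]

lemma ddIdent_pt2_pt2 [FiniteDimensional F W] (T : Module.End F V ⊗[F] Module.End F W) :
    ddIdent F V W (pt2 F V (Module.Dual F W) (pt2 F V W T)) = T := by
  induction T using TensorProduct.induction_on with
  | zero => simp
  | tmul f g =>
    rw [pt2_tmul, pt2_tmul, transpose_transpose]
    simp [ddIdent]
  | add x y hx hy => rw [map_add, map_add, map_add, hx, hy]

lemma pt2_map_mul {A : Type*} [Ring A] [Algebra F A] (ρV : A →ₐ[F] Module.End F V)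
    (ρW : A →ₐ[F] Module.End F W) (u v : A ⊗[F] A) :
    pt2 F V W (map ρV ρW u) * pt2 F V W (map ρV ρW v) = pt2 F V W (map ρV ρW (mulRightOp u v)) := by
  induction u using TensorProduct.induction_on with
  | add x y hx hy => simp_all [add_mul, add_mulRightOp]
  | _ => induction v using TensorProduct.induction_on <;>
      simp_all [mul_add, mulRightOp_add, transpose_mul]

lemma isUnit_and_ddIdent_inverse_pt2_inverse [FiniteDimensional F W]
    {P Q : Module.End F V ⊗[F] Module.End F W} (hPQ : P * Q = 1) (hQP : Q * P = 1)
    {X : Module.End F V ⊗[F] Module.End F (Module.Dual F W)}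
    (hXP : X * pt2 F V W P = 1) (hPX : pt2 F V W P * X = 1) :
    IsUnit X ∧ IsUnit (pt2 F V (Module.Dual F W) (Ring.inverse X)) ∧
      Q = ddIdent F V W (Ring.inverse (pt2 F V (Module.Dual F W) (Ring.inverse X))) := by
  have hX : Ring.inverse X = pt2 F V W P := Ring.inverse_unit ⟨X, _, hXP, hPX⟩
  have h1 : pt2 F V (Module.Dual F W) (pt2 F V W P) *
      pt2 F V (Module.Dual F W) (pt2 F V W Q) = 1 := by
    rw [← pt2_pt2_mul, hPQ, pt2_one, pt2_one]
  have h2 : pt2 F V (Module.Dual F W) (pt2 F V W Q) *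
      pt2 F V (Module.Dual F W) (pt2 F V W P) = 1 := by
    rw [← pt2_pt2_mul, hQP, pt2_one, pt2_one]
  refine ⟨⟨⟨X, _, hXP, hPX⟩, rfl⟩, hX ▸ ⟨⟨_, _, h1, h2⟩, rfl⟩, ?_⟩
  rw [hX, Ring.inverse_unit ⟨_, _, h1, h2⟩]
  exact (ddIdent_pt2_pt2 Q).symm

end PartialTranspose

namespace IsQT

open Algebra.TensorProduct TensorLegs PartialTranspose

variable {F} {A : Type*} [Ring A]

section Bialgebra

variable [Bialgebra F A] {R Ri : A ⊗[F] A}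

lemma isUnit (hQT : IsQT F A R Ri) : IsUnit R := ⟨⟨R, Ri, hQT.mulInv, hQT.invMul⟩, rfl⟩

lemma flipT_mul_flipT_inv (hQT : IsQT F A R Ri) : flipT F A R * flipT F A Ri = 1 := by
  rw [← map_mul, hQT.mulInv, map_one]

lemma flipT_inv_mul_flipT (hQT : IsQT F A R Ri) : flipT F A Ri * flipT F A R = 1 := by
  rw [← map_mul, hQT.invMul, map_one]

lemma counit2l_eq_one (hQT : IsQT F A R Ri) : counit2l F A R = 1 := by
  have h := congrArg (counitLeft3 F A) hQT.copL
  rw [counitLeft3_cop12, map_mul, counitLeft3_i13, counitLeft3_i23, eq_comm,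
    hQT.isUnit.mul_eq_right] at h
  simpa using congrArg (counit2l F A) h

lemma counit2r_eq_one (hQT : IsQT F A R Ri) : counit2r F A R = 1 := by
  have h := congrArg (counitRight3 F A) hQT.copR
  rw [counitRight3_cop23, map_mul, counitRight3_i13, counitRight3_i12, eq_comm,
    hQT.isUnit.mul_eq_right] at h
  simpa using congrArg (counit2r F A) h

lemma counit2l_inv (hQT : IsQT F A R Ri) : counit2l F A Ri = 1 := by
  simpa [hQT.counit2l_eq_one] using congrArg (counit2l F A) hQT.mulInv

lemma counit2r_inv (hQT : IsQT F A R Ri) : counit2r F A Ri = 1 := by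
  simpa [hQT.counit2r_eq_one] using congrArg (counit2r F A) hQT.mulInv

lemma mul_cop (hQT : IsQT F A R Ri) (a : A) : R * cop F A a = copOp F A a * R := by
  rw [← hQT.intw a, mul_assoc _ Ri, hQT.invMul, mul_one]

lemma flipT_inv_mul_cop_mul_flipT (hQT : IsQT F A R Ri) (a : A) :
    flipT F A Ri * cop F A a * flipT F A R = copOp F A a := by
  have h := congrArg (flipT F A) (hQT.mul_cop a)
  rw [map_mul, map_mul, copOp_apply, flipT_flipT, ← copOp_apply] at h
  rw [mul_assoc, ← h, ← mul_assoc, hQT.flipT_inv_mul_flipT, one_mul]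

lemma i12_mul_cop12 (hQT : IsQT F A R Ri) (u : A ⊗[F] A) :
    i12 F A R * cop12 F A u = swap12 F A (cop12 F A u) * i12 F A R := by
  induction u using TensorProduct.induction_on with
  | zero => simp
  | tmul x y =>
    rw [cop12_tmul, swap12_assoc, i12_eq_assoc, ← map_mul, ← map_mul, tmul_mul_tmul,
      tmul_mul_tmul, hQT.mul_cop, copOp_apply, one_mul, mul_one]
  | add x y hx hy => rw [map_add, map_add, mul_add, add_mul, hx, hy]

lemma yangBaxter (hQT : IsQT F A R Ri) :
    i12 F A R * i13 F A R * i23 F A R = i23 F A R * i13 F A R * i12 F A R := by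
  rw [mul_assoc, ← hQT.copL, hQT.i12_mul_cop12, hQT.copL, map_mul, swap12_i13, swap12_i23]

lemma yangBaxter_flipT (hQT : IsQT F A R Ri) :
    i23 F A (flipT F A R) * i13 F A (flipT F A R) * i12 F A (flipT F A R) =
      i12 F A (flipT F A R) * i13 F A (flipT F A R) * i23 F A (flipT F A R) := by
  simpa only [map_mul, swap13_i12, swap13_i13, swap13_i23] using
    congrArg (swap13 F A) hQT.yangBaxter

lemma cop12_flipT (hQT : IsQT F A R Ri) :
    cop12 F A (flipT F A R) = i23 F A (flipT F A R) * i13 F A (flipT F A R) := by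
  simpa only [rotateLeft_cop23, map_mul, rotateLeft_i13, rotateLeft_i12] using
    congrArg (rotateLeft F A) hQT.copR

lemma cop23_flipT (hQT : IsQT F A R Ri) :
    cop23 F A (flipT F A R) = i12 F A (flipT F A R) * i13 F A (flipT F A R) := by
  simpa only [rotateRight_cop12, map_mul, rotateRight_i13, rotateRight_i23] using
    congrArg (rotateRight F A) hQT.copL

lemma cocycle_flipT_inv (hQT : IsQT F A R Ri) :
    i12 F A (flipT F A Ri) * cop12 F A (flipT F A Ri) =
      i23 F A (flipT F A Ri) * cop23 F A (flipT F A Ri) := by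
  set J := flipT F A Ri
  set K := flipT F A R
  have hJK : J * K = 1 := hQT.flipT_inv_mul_flipT
  have hKJ : K * J = 1 := hQT.flipT_mul_flipT_inv
  -- both sides are the inverses of the two sides of the Yang-Baxter equation for `R₂₁`
  have hYB : cop12 F A K * i12 F A K = cop23 F A K * i23 F A K := by
    rw [hQT.cop12_flipT, hQT.cop23_flipT, hQT.yangBaxter_flipT]
  refine left_inv_eq_right_inv (a := cop12 F A K * i12 F A K) ?_ ?_
  · rw [mul_assoc, ← mul_assoc (cop12 F A J), ← map_mul, hJK, map_one, one_mul, ← map_mul,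
      hJK, map_one]
  · rw [hYB, mul_assoc, ← mul_assoc (i23 F A K), ← map_mul, hKJ, map_one, one_mul,
      ← map_mul, hKJ, map_one]

lemma isTwistPair_conjEquiv (hQT : IsQT F A R Ri) {D Di : A}
    (hD1 : D * Di = 1) (hD2 : Di * D = 1) (hDgl : cop F A D = D ⊗ₜ D) :
    IsTwistPair F A R Ri (flipT F A Ri) (flipT F A R) (conjEquiv F A D Di hD1 hD2) := by
  have hDD : (D ⊗ₜ[F] D) * (Di ⊗ₜ Di) = 1 := by rw [tmul_mul_tmul, hD1, one_def]
  refine ⟨hQT.flipT_inv_mul_flipT, hQT.flipT_mul_flipT_inv, hQT.cocycle_flipT_inv, ?_, ?_,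
    fun a => ?_, ?_⟩
  · rw [counit2l_flipT, hQT.counit2r_inv]
  · rw [counit2r_flipT, hQT.counit2l_inv]
  · rw [mapT_conjEquiv, hQT.flipT_inv_mul_cop_mul_flipT]
    show (D ⊗ₜ D) * copOp F A (Di * a * D) * (Di ⊗ₜ Di) = _
    rw [copOp_conj_of_grouplike hD1 hD2 hDgl]
    simp only [← mul_assoc, hDD, one_mul]
    rw [mul_assoc, hDD, mul_one]
  · have hR : R * (D ⊗ₜ D) = (D ⊗ₜ D) * R := by
      simpa [hDgl] using hQT.mul_cop D
    rw [mapT_conjEquiv, ← hR, mul_assoc, hDD, mul_one, flipT_flipT, hQT.invMul, one_mul]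

end Bialgebra

section Hopf

variable [HopfAlgebra F A] {R Ri : A ⊗[F] A}

lemma rTensor_antipode_eq_inv (hQT : IsQT F A R Ri) :
    (HopfAlgebra.antipode F).rTensor A R = Ri := by
  have h := antipodeMul12_cop12 (F := F) R
  rw [hQT.copL, antipodeMul12_i13_mul_i23, hQT.counit2l_eq_one, ← one_def] at h
  rw [← one_mul Ri, ← h, mul_assoc, hQT.mulInv, mul_one]

lemma cop12_inv (hQT : IsQT F A R Ri) : cop12 F A Ri = i23 F A Ri * i13 F A Ri := by
  refine left_inv_eq_right_inv (a := cop12 F A R) ?_ ?_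
  · rw [← map_mul, hQT.invMul, map_one]
  · rw [hQT.copL, mul_assoc, ← mul_assoc (i23 F A R), ← map_mul, hQT.mulInv, map_one, one_mul,
      ← map_mul, hQT.mulInv, map_one]

lemma mulRightOp_rTensor_antipode_inv_left (hQT : IsQT F A R Ri) :
    mulRightOp ((HopfAlgebra.antipode F).rTensor A Ri) Ri = 1 := by
  have h := antipodeMul12_cop12 (F := F) Ri
  rwa [hQT.cop12_inv, antipodeMul12_i23_mul_i13, hQT.counit2l_inv, ← one_def] at h

lemma mulRightOp_rTensor_antipode_inv_right (hQT : IsQT F A R Ri) :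
    mulRightOp Ri ((HopfAlgebra.antipode F).rTensor A Ri) = 1 := by
  have h := mulAntipode12_cop12 (F := F) Ri
  rwa [hQT.cop12_inv, mulAntipode12_i23_mul_i13, hQT.counit2l_inv, ← one_def] at h

lemma tmul_inv_mul_flipT_inv_mul_cop {b bi : A} (hQT : IsQT F A R Ri) (hb2 : bi * b = 1)
    (hbc : ∀ a : A, b * a = a * b) (hΔb : cop F A b = (b ⊗ₜ b) * (flipT F A R * R)) :
    (bi ⊗ₜ bi) * flipT F A Ri * cop F A b = R := by
  rw [hΔb, mul_assoc, ← mul_assoc (flipT F A Ri), ← tmul_self_mul_comm hbc, ← mul_assoc,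
    ← mul_assoc (bi ⊗ₜ bi), tmul_mul_tmul, hb2, ← one_def, one_mul, ← mul_assoc,
    hQT.flipT_inv_mul_flipT, one_mul]

lemma isBoundaryGauge_inv_balance (hQT : IsQT F A R Ri)
    {D Di : A} (hD1 : D * Di = 1) (hD2 : Di * D = 1)
    (hDS : ∀ a : A, D * a * Di = HopfAlgebra.antipode F (HopfAlgebra.antipode F a))
    {b bi : A} (hb1 : b * bi = 1) (hb2 : bi * b = 1) (hbc : ∀ a : A, b * a = a * b)
    (hΔb : cop F A b = (b ⊗ₜ b) * (flipT F A R * R)) :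
    IsBoundaryGauge F A R (flipT F A Ri) (conjEquiv F A D Di hD1 hD2) bi b hb2 hb1 := by
  intro V W _ _ _ _ _ _ ρV ρW
  have hψ (x : A) :
      ((conjEquiv F A D Di hD1 hD2).trans (conjEquiv F A bi b hb2 hb1)).toAlgHom x =
      (HopfAlgebra.antipode F ∘ₗ HopfAlgebra.antipode F) x := by
    show bi * (D * x * Di) * b = _
    rw [← hbc, ← mul_assoc, hb1, one_mul, hDS]
    rfl
  have hR : map (ρV.comp ((conjEquiv F A D Di hD1 hD2).trans
      (conjEquiv F A bi b hb2 hb1)).toAlgHom) ρW R =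
      map ρV ρW ((HopfAlgebra.antipode F).rTensor A Ri) := by
    rw [← hQT.rTensor_antipode_eq_inv, ← LinearMap.rTensor_comp_apply, ← map_id_eq_rTensor hψ,
      map_comp_left_apply]
  dsimp only
  rw [hR, hQT.tmul_inv_mul_flipT_inv_mul_cop hb2 hbc hΔb]
  refine isUnit_and_ddIdent_inverse_pt2_inverse (P := map ρV ρW Ri) ?_ ?_ ?_ ?_
  · rw [← map_mul, hQT.invMul, map_one]
  · rw [← map_mul, hQT.mulInv, map_one]
  · rw [pt2_map_mul, hQT.mulRightOp_rTensor_antipode_inv_left, map_one, pt2_one]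
  · rw [pt2_map_mul, hQT.mulRightOp_rTensor_antipode_inv_right, map_one, pt2_one]

end Hopf

end IsQT

theorem statement13_general {F A : Type*} [Field F] [Ring A] [HopfAlgebra F A]
    (R Ri : A ⊗[F] A) (hQT : IsQT F A R Ri)
    (D Di : A) (hD1 : D * Di = 1) (hD2 : Di * D = 1)
    (hDgl : cop F A D = D ⊗ₜ[F] D)
    (hDS : ∀ a : A, D * a * Di =
      HopfAlgebra.antipode (R := F) (HopfAlgebra.antipode (R := F) a))
    (b bi : A) (hb1 : b * bi = 1) (hb2 : bi * b = 1)
    (hbc : ∀ a : A, b * a = a * b)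
    (hΔb : cop F A b = (b ⊗ₜ[F] b) * (flipT F A R * R)) :
    IsTwistPair F A R Ri (flipT F A Ri) (flipT F A R) (conjEquiv F A D Di hD1 hD2) ∧
    IsBoundaryGauge F A R (flipT F A Ri) (conjEquiv F A D Di hD1 hD2) bi b hb2 hb1 :=
  ⟨hQT.isTwistPair_conjEquiv hD1 hD2 hDgl,
    hQT.isBoundaryGauge_inv_balance hD1 hD2 hDS hb1 hb2 hbc hΔb⟩

/-- `(Ad(D), (R₂₁)⁻¹)` is a twist pair and the inverse of the balance is
a boundary gauge transformation for it. -/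
theorem statement13 {F A : Type*} [Field F] [Ring A] [HopfAlgebra F A]
    (hS : Function.Bijective (HopfAlgebra.antipode (R := F) (A := A)))
    (R Ri : A ⊗[F] A) (hQT : IsQT F A R Ri)
    (D Di : A) (hD1 : D * Di = 1) (hD2 : Di * D = 1)
    (hDgl : cop F A D = D ⊗ₜ[F] D) (hDe : Bialgebra.counitAlgHom F A D = 1)
    (hDS : ∀ a : A, D * a * Di =
      HopfAlgebra.antipode (R := F) (HopfAlgebra.antipode (R := F) a))
    (b bi : A) (hb1 : b * bi = 1) (hb2 : bi * b = 1)
    (hbc : ∀ a : A, b * a = a * b)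
    (hΔb : cop F A b = (b ⊗ₜ[F] b) * (flipT F A R * R)) :
    IsTwistPair F A R Ri (flipT F A Ri) (flipT F A R) (conjEquiv F A D Di hD1 hD2) ∧
    IsBoundaryGauge F A R (flipT F A Ri) (conjEquiv F A D Di hD1 hD2) bi b hb2 hb1 :=
  statement13_general R Ri hQT D Di hD1 hD2 hDgl hDS b bi hb1 hb2 hbc hΔb
end
end

section
/- Let A be a quasitriangular bialgebra over a field F with R-matrix R, ψ an algebra automorphism of A, J an invertible element of A⊗A, D an invertible group-like element of A (Δ(D) = D⊗D, ε(D) = 1), and K an invertible element of A with Δ(K) = J⁻¹·(1⊗K)·R^ψ·(K⊗1), where R^ψ = (ψ⊗id)(R). Then the dual K-matrix K̃ := D·K⁻¹ satisfies Δ(K̃) = (K̃⊗1)·((1⊗D)·R^ψ·(1⊗D⁻¹))⁻¹·(1⊗K̃)·J. -/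
open TensorProduct

noncomputable section

variable (F : Type*) [Field F]

/-!
Since `D` is group-like, `Δ(D K⁻¹)` is a left inverse of `Δ(K) ⬝ (D⁻¹ ⊗ D⁻¹)`. Inserting the
factorization `Δ(K) = J⁻¹ ⬝ (1 ⊗ K) ⬝ R^ψ ⬝ (K ⊗ 1)`, the claimed right-hand side is a right inverse
of the same element, so the two coincide.
-/

section DualKMatrix

open Algebra.TensorProduct

variable {R A : Type*} [CommSemiring R] [Semiring A] [Algebra R A]

theorem tmul_one_mul_tmul_mul_tmul_one (a b c d : A) :
    (a ⊗ₜ[R] (1 : A)) * (b ⊗ₜ[R] c) * (d ⊗ₜ[R] (1 : A)) = (a * b * d) ⊗ₜ[R] c := by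
  rw [tmul_mul_tmul, tmul_mul_tmul, one_mul, mul_one]

theorem factorization_mul_dual_factorization_eq_one (P X J Ji : A ⊗[R] A) (D Di K Kinv : A)
    (hD : Di * D = 1) (hK : K * Kinv = 1) (hJ : Ji * J = 1)
    (hX : ((1 : A) ⊗ₜ[R] D) * P * ((1 : A) ⊗ₜ[R] Di) * X = 1) :
    Ji * (((1 : A) ⊗ₜ[R] K) * (P * (K ⊗ₜ[R] (1 : A)))) * (Di ⊗ₜ[R] Di) *
        (((D * Kinv) ⊗ₜ[R] (1 : A)) * X * ((1 : A) ⊗ₜ[R] (D * Kinv)) * J) = 1 := by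
  have hfirstLeg : (K ⊗ₜ[R] (1 : A)) * (Di ⊗ₜ[R] Di) * ((D * Kinv) ⊗ₜ[R] (1 : A)) =
      (1 : A) ⊗ₜ[R] Di := by
    rw [tmul_one_mul_tmul_mul_tmul_one, mul_assoc K, ← mul_assoc Di, hD, one_mul, hK]
  -- splitting off `1 ⊗ D` lets `X` cancel the conjugate `(1 ⊗ D) ⬝ P ⬝ (1 ⊗ D⁻¹)`
  have hsplit : (1 : A) ⊗ₜ[R] K = ((1 : A) ⊗ₜ[R] (K * Di)) * ((1 : A) ⊗ₜ[R] D) := by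
    rw [tmul_mul_tmul, one_mul, mul_assoc, hD, mul_one]
  have hcancel : ((1 : A) ⊗ₜ[R] (K * Di)) * ((1 : A) ⊗ₜ[R] (D * Kinv)) = 1 := by
    rw [tmul_mul_tmul, one_mul, mul_assoc, ← mul_assoc Di, hD, one_mul, hK]
    rfl
  calc _ = Ji * ((1 : A) ⊗ₜ[R] K) * P *
          ((K ⊗ₜ[R] (1 : A)) * (Di ⊗ₜ[R] Di) * ((D * Kinv) ⊗ₜ[R] (1 : A))) *
          X * ((1 : A) ⊗ₜ[R] (D * Kinv)) * J := by simp only [mul_assoc]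
    _ = Ji * ((1 : A) ⊗ₜ[R] (K * Di)) *
          (((1 : A) ⊗ₜ[R] D) * P * ((1 : A) ⊗ₜ[R] Di) * X) *
          ((1 : A) ⊗ₜ[R] (D * Kinv)) * J := by rw [hfirstLeg, hsplit]; simp only [mul_assoc]
    _ = Ji * (((1 : A) ⊗ₜ[R] (K * Di)) * ((1 : A) ⊗ₜ[R] (D * Kinv))) * J := by
          rw [hX, mul_one, mul_assoc Ji]
    _ = 1 := by rw [hcancel, mul_one, hJ]

end DualKMatrix

theorem statement14_general {F A : Type*} [Field F] [Ring A] [Bialgebra F A]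
    (R : A ⊗[F] A) (ψ : A ≃ₐ[F] A) (J Ji : A ⊗[F] A) (hJ2 : Ji * J = 1)
    (D Di : A) (hD1 : D * Di = 1) (hD2 : Di * D = 1)
    (hDgl : cop F A D = D ⊗ₜ[F] D)
    (K Kinv : A) (hK1 : K * Kinv = 1) (hK2 : Kinv * K = 1)
    (hcop : cop F A K = Ji * (((1 : A) ⊗ₜ[F] K) * (rpsi F A R ψ * (K ⊗ₜ[F] (1 : A)))))
    (X : A ⊗[F] A)
    (hX2 : (((1 : A) ⊗ₜ[F] D) * rpsi F A R ψ * ((1 : A) ⊗ₜ[F] Di)) * X = 1) :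
    cop F A (D * Kinv) =
      ((D * Kinv) ⊗ₜ[F] (1 : A)) * X * ((1 : A) ⊗ₜ[F] (D * Kinv)) * J := by
  have hleft : cop F A (D * Kinv) * (cop F A K * (Di ⊗ₜ[F] Di)) = 1 := by
    rw [← mul_assoc, map_mul, mul_assoc (cop F A D), ← map_mul, hK2, map_one, mul_one, hDgl,
      Algebra.TensorProduct.tmul_mul_tmul, hD1]
    rfl
  have hright : cop F A K * (Di ⊗ₜ[F] Di) *
      (((D * Kinv) ⊗ₜ[F] (1 : A)) * X * ((1 : A) ⊗ₜ[F] (D * Kinv)) * J) = 1 := by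
    rw [hcop]
    exact factorization_mul_dual_factorization_eq_one _ X J Ji D Di K Kinv hD2 hK1 hJ2 hX2
  exact left_inv_eq_right_inv hleft hright

/-- the coproduct of the dual K-matrix `K̃ = D ⬝ K⁻¹`:
`Δ(K̃) = (K̃ ⊗ 1) ⬝ ((1 ⊗ D) ⬝ R^ψ ⬝ (1 ⊗ D⁻¹))⁻¹ ⬝ (1 ⊗ K̃) ⬝ J`. -/
theorem statement14 {F A : Type*} [Field F] [Ring A] [Bialgebra F A]
    (R Ri : A ⊗[F] A) (hQT : IsQT F A R Ri)
    (ψ : A ≃ₐ[F] A) (J Ji : A ⊗[F] A) (hJ1 : J * Ji = 1) (hJ2 : Ji * J = 1)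
    (D Di : A) (hD1 : D * Di = 1) (hD2 : Di * D = 1)
    (hDgl : cop F A D = D ⊗ₜ[F] D) (hDe : Bialgebra.counitAlgHom F A D = 1)
    (K Kinv : A) (hK1 : K * Kinv = 1) (hK2 : Kinv * K = 1)
    (hcop : cop F A K = Ji * (((1 : A) ⊗ₜ[F] K) * (rpsi F A R ψ * (K ⊗ₜ[F] (1 : A)))))
    (X : A ⊗[F] A)
    (hX1 : X * (((1 : A) ⊗ₜ[F] D) * rpsi F A R ψ * ((1 : A) ⊗ₜ[F] Di)) = 1)
    (hX2 : (((1 : A) ⊗ₜ[F] D) * rpsi F A R ψ * ((1 : A) ⊗ₜ[F] Di)) * X = 1) :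
    cop F A (D * Kinv) =
      ((D * Kinv) ⊗ₜ[F] (1 : A)) * X * ((1 : A) ⊗ₜ[F] (D * Kinv)) * J :=
  statement14_general R ψ J Ji hJ2 D Di hD1 hD2 hDgl K Kinv hK1 hK2 hcop X hX2

end
end

section
/- Let A be a Hopf algebra over a field F with bijective antipode S, quasitriangular with R-matrix R, and with a sovereign element D. Let B and B′ be right coideal subalgebras of A, let (ψ, J, K) be a cylindrical structure on (A, B), and let (ψ, J, K′) be a cylindrical structure on (A, B′) with the same twist pair (ψ, J). Then the generalized dual K-matrix K̃ := D·(K′)⁻¹ is a boundary gauge transformation for (ψ, J). -/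
open TensorProduct

noncomputable section

variable (F : Type*) [Field F]

/-!
Write `g = D K'⁻¹`. Substituting `Δ(K') = J⁻¹ (1 ⊗ K') R^ψ (K' ⊗ 1)` and `Δ(D⁻¹) = D⁻¹ ⊗ D⁻¹`
turns `(g ⊗ g) J Δ(g⁻¹)` into `(g ⊗ D) R^ψ (g⁻¹ ⊗ D⁻¹) = (ψᵍ ⊗ S²)(R)`, because `D`
implements `S²`. On the other side, transposing the second leg of `R_{V,W}` gives the image of
`(id ⊗ op)(R) ∈ A ⊗ Aᵐᵒᵖ` acting on `V ⊗ W^∨`. From `(id ⊗ Δ)(R) = R₁₃ R₁₂` and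
`(id ⊗ ε)(R) = 1`, the elements `(id ⊗ κ)(R)` and `(id ⊗ κ S)(R)` are mutually inverse for every
anti-multiplicative `κ`. With `κ = op` this gives `(R_{V,W}^{t₂})⁻¹ = ((id ⊗ S)(R)_{V,W})^{t₂}`,
and with `κ = S` the inverse of `(id ⊗ S)(R)` is `(id ⊗ S²)(R)`.
-/

section Bialgebra

variable {F} {A : Type*} [Ring A] [Bialgebra F A] {R Ri : A ⊗[F] A}

@[simp]
lemma counit2r_tmul (x y : A) :
    counit2r F A (x ⊗ₜ[F] y) = Coalgebra.counit (R := F) y • x := by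
  simp [counit2r]

@[simp]
lemma counit2r_cop (a : A) : counit2r F A (cop F A a) = a := by
  change TensorProduct.rid F A (LinearMap.lTensor A Coalgebra.counit (Coalgebra.comul a)) = a
  simp [Coalgebra.lTensor_counit_comul]

lemma IsQT.counit2r_eq_one_s16 (hQT : IsQT F A R Ri) : counit2r F A R = 1 := by
  let m := Algebra.TensorProduct.map (AlgHom.id F A) (counit2r F A)
  have hcop23 : m.comp (cop23 F A) = AlgHom.id F _ := by ext <;> simp [m, cop23]
  have hi13 : m.comp (i13 F A) = Algebra.TensorProduct.includeLeft.comp (counit2r F A) := by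
    ext <;> simp [m, i13]
  have hi12 : m.comp (i12 F A) = AlgHom.id F _ := by ext <;> simp [m, i12]
  have hR : R = (counit2r F A R ⊗ₜ[F] 1) * R := by
    have h := congrArg m hQT.copR
    rw [map_mul] at h
    change (m.comp (cop23 F A)) R = (m.comp (i13 F A)) R * (m.comp (i12 F A)) R at h
    simpa [hcop23, hi13, hi12] using h
  have h1 : counit2r F A R ⊗ₜ[F] (1 : A) = 1 := by
    simpa [mul_assoc, hQT.mulInv] using (congrArg (· * Ri) hR).symm
  simpa using congrArg (counit2r F A) h1

lemma cop_eq_tmul_of_mul_eq_one {D Di : A} (hD1 : D * Di = 1) (hD2 : Di * D = 1)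
    (hD : cop F A D = D ⊗ₜ[F] D) : cop F A Di = Di ⊗ₜ[F] Di :=
  left_inv_eq_right_inv (a := D ⊗ₜ[F] D) (by rw [← hD, ← map_mul, hD2, map_one])
    (by rw [Algebra.TensorProduct.tmul_mul_tmul, hD1, Algebra.TensorProduct.one_def])

lemma IsCylindrical.tmul_mul_mul_cop {B : Subalgebra F A} {J Ji : A ⊗[F] A} {ψ : A ≃ₐ[F] A}
    {K Kinv D Di : A} (hcyl : IsCylindrical F A R Ri B J Ji ψ K Kinv)
    (hDi : cop F A Di = Di ⊗ₜ[F] Di) :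
    ((D * Kinv) ⊗ₜ[F] (D * Kinv)) * J * cop F A (K * Di) =
      ((D * Kinv) ⊗ₜ[F] D) * rpsi F A R ψ * ((K * Di) ⊗ₜ[F] Di) := by
  have hleft : ((D * Kinv) ⊗ₜ[F] (D * Kinv)) * ((1 : A) ⊗ₜ[F] K) = (D * Kinv) ⊗ₜ[F] D := by
    rw [Algebra.TensorProduct.tmul_mul_tmul, mul_one, mul_assoc, hcyl.kInvMul, mul_one]
  have hright : (K ⊗ₜ[F] (1 : A)) * (Di ⊗ₜ[F] Di) = (K * Di) ⊗ₜ[F] Di := by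
    rw [Algebra.TensorProduct.tmul_mul_tmul, one_mul]
  calc ((D * Kinv) ⊗ₜ[F] (D * Kinv)) * J * cop F A (K * Di)
      = ((D * Kinv) ⊗ₜ[F] (D * Kinv)) * (J * Ji) * ((1 : A) ⊗ₜ[F] K) * rpsi F A R ψ *
          ((K ⊗ₜ[F] (1 : A)) * (Di ⊗ₜ[F] Di)) := by
        rw [map_mul, hcyl.copK, hDi]
        simp only [mul_assoc]
    _ = ((D * Kinv) ⊗ₜ[F] D) * rpsi F A R ψ * ((K * Di) ⊗ₜ[F] Di) := by
        rw [hcyl.twist.mulInv, mul_one, hleft, hright]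

variable {X : Type*} [Ring X] [Algebra F X]

lemma lTensor_mul_lTensor_eq_lTensor_i13_mul_i12 (f₁ f₂ : A →ₗ[F] X) (h : A ⊗[F] A →ₗ[F] X)
    (hf : ∀ x y, f₁ x * f₂ y = h (y ⊗ₜ[F] x)) (v w : A ⊗[F] A) :
    LinearMap.lTensor A f₁ v * LinearMap.lTensor A f₂ w =
      LinearMap.lTensor A h (i13 F A v * i12 F A w) := by
  induction v using TensorProduct.induction_on with
  | zero => simp
  | add v₁ v₂ h₁ h₂ => simp only [map_add, add_mul, h₁, h₂]
  | tmul a b =>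
    induction w using TensorProduct.induction_on with
    | zero => simp
    | add w₁ w₂ h₁ h₂ => simp only [map_add, mul_add, h₁, h₂]
    | tmul c d => simp [i13, i12, hf]

lemma lTensor_cop23 (h : A ⊗[F] A →ₗ[F] X)
    (hh : ∀ a, h (cop F A a) = algebraMap F X (Coalgebra.counit a)) (x : A ⊗[F] A) :
    LinearMap.lTensor A h (cop23 F A x) = counit2r F A x ⊗ₜ[F] 1 := by
  induction x using TensorProduct.induction_on with
  | zero => simp
  | add u v hu hv => simp only [map_add, hu, hv, TensorProduct.add_tmul]
  | tmul a b => simp [cop23, hh, Algebra.algebraMap_eq_smul_one, TensorProduct.smul_tmul]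

end Bialgebra

section Representations

variable {F} {A : Type*} [Ring A] [Algebra F A]
variable {V W : Type*} [AddCommGroup V] [Module F V] [AddCommGroup W] [Module F W]

def dualRep (ρW : A →ₐ[F] Module.End F W) : Aᵐᵒᵖ →ₐ[F] Module.End F (Module.Dual F W) :=
  AlgHom.ofLinearMap
    (Module.Dual.transpose ∘ₗ ρW.toLinearMap ∘ₗ (MulOpposite.opLinearEquiv F).symm.toLinearMap)
    (by ext; simp [Module.Dual.transpose_apply])
    (fun a b => by simp only [LinearMap.coe_comp, Function.comp_apply,
      LinearEquiv.coe_coe, MulOpposite.coe_opLinearEquiv_symm, MulOpposite.unop_mul,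
      AlgHom.toLinearMap_apply, map_mul]; exact Module.Dual.transpose_comp _ _)

lemma transpose_transpose_eq_conjAlgEquiv [FiniteDimensional F W] (f : Module.End F W) :
    Module.Dual.transpose (R := F) (Module.Dual.transpose (R := F) f) =
      (Module.evalEquiv F W).conjAlgEquiv F f := by
  ext φ l
  obtain ⟨x, rfl⟩ := (Module.evalEquiv F W).surjective φ
  simp [Module.Dual.transpose_apply, LinearEquiv.conjAlgEquiv_apply]

lemma pt2_map (σ : A →ₐ[F] Module.End F V) (ρW : A →ₐ[F] Module.End F W) (x : A ⊗[F] A) :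
    pt2 F V W (Algebra.TensorProduct.map σ ρW x) =
      Algebra.TensorProduct.map σ (dualRep ρW)
        (LinearMap.lTensor A (MulOpposite.opLinearEquiv F).toLinearMap x) := by
  induction x using TensorProduct.induction_on with
  | zero => simp
  | add u v hu hv => simp only [map_add, hu, hv]
  | tmul a b => rfl

lemma pt2_map_dualRep [FiniteDimensional F W] (σ : A →ₐ[F] Module.End F V)
    (ρW : A →ₐ[F] Module.End F W) (f : A →ₗ[F] A) (x : A ⊗[F] A) :
    pt2 F V (Module.Dual F W)
        (Algebra.TensorProduct.map σ (dualRep ρW)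
          (LinearMap.lTensor A ((MulOpposite.opLinearEquiv F).toLinearMap ∘ₗ f) x)) =
      Algebra.TensorProduct.map (AlgHom.id F _) ((Module.evalEquiv F W).conjAlgEquiv F).toAlgHom
        (Algebra.TensorProduct.map σ ρW (LinearMap.lTensor A f x)) := by
  induction x using TensorProduct.induction_on with
  | zero => simp
  | add u v hu hv => simp only [map_add, hu, hv]
  | tmul a b => simp [pt2, dualRep, transpose_transpose_eq_conjAlgEquiv]

lemma ddIdent_map_conjAlgEquiv [FiniteDimensional F W]
    (t : Module.End F V ⊗[F] Module.End F W) :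
    ddIdent F V W (Algebra.TensorProduct.map (AlgHom.id F _)
      ((Module.evalEquiv F W).conjAlgEquiv F).toAlgHom t) = t := by
  induction t using TensorProduct.induction_on with
  | zero => simp
  | add u v hu hv => simp only [map_add, hu, hv]
  | tmul f g =>
    simp only [ddIdent, Algebra.TensorProduct.map_tmul, TensorProduct.map_tmul]
    exact congrArg (f ⊗ₜ[F] ·) ((Module.evalEquiv F W).conj.symm_apply_apply g)

end Representations

section HopfAlgebra

variable {F} {A : Type*} [Ring A] [HopfAlgebra F A] {R Ri : A ⊗[F] A}

local notation "S" => HopfAlgebra.antipode (R := F) (A := A)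

section AntiMultiplicative

variable {X : Type*} [Ring X] [Algebra F X]
variable (κ : A →ₗ[F] X) (hκ₁ : κ 1 = 1) (hκ : ∀ x y, κ (x * y) = κ y * κ x)
include hκ₁ hκ

lemma IsQT.lTensor_mul_lTensor_antipode_eq_one (hQT : IsQT F A R Ri) :
    LinearMap.lTensor A κ R * LinearMap.lTensor A (κ ∘ₗ S) R = 1 := by
  rw [lTensor_mul_lTensor_eq_lTensor_i13_mul_i12 κ (κ ∘ₗ S)
      (κ ∘ₗ LinearMap.mul' F A ∘ₗ LinearMap.rTensor A S) (by simp [hκ]), ← hQT.copR,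
    lTensor_cop23 _ (fun a => by simp [cop, Algebra.algebraMap_eq_smul_one, hκ₁]),
    hQT.counit2r_eq_one_s16]
  rfl

lemma IsQT.lTensor_antipode_mul_lTensor_eq_one (hQT : IsQT F A R Ri) :
    LinearMap.lTensor A (κ ∘ₗ S) R * LinearMap.lTensor A κ R = 1 := by
  rw [lTensor_mul_lTensor_eq_lTensor_i13_mul_i12 (κ ∘ₗ S) κ
      (κ ∘ₗ LinearMap.mul' F A ∘ₗ LinearMap.lTensor A S) (by simp [hκ]), ← hQT.copR,
    lTensor_cop23 _ (fun a => by simp [cop, Algebra.algebraMap_eq_smul_one, hκ₁]),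
    hQT.counit2r_eq_one_s16]
  rfl

end AntiMultiplicative

variable {V W : Type*} [AddCommGroup V] [Module F V] [AddCommGroup W] [Module F W]

lemma map_tmul_mul_rpsi_mul_tmul (ρV : A →ₐ[F] Module.End F V) (ρW : A →ₐ[F] Module.End F W)
    (ψ : A ≃ₐ[F] A) {g gi : A} (h1 : g * gi = 1) (h2 : gi * g = 1) {D Di : A}
    (hDS : ∀ a : A, D * a * Di = S (S a)) (x : A ⊗[F] A) :
    Algebra.TensorProduct.map ρV ρW ((g ⊗ₜ[F] D) * rpsi F A x ψ * (gi ⊗ₜ[F] Di)) =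
      Algebra.TensorProduct.map (ρV.comp (ψ.trans (conjEquiv F A g gi h1 h2)).toAlgHom) ρW
        (LinearMap.lTensor A (S ∘ₗ S) x) := by
  induction x using TensorProduct.induction_on with
  | zero => simp [rpsi]
  | add u v hu hv => simp only [rpsi, map_add, mul_add, add_mul] at hu hv ⊢; rw [hu, hv]
  | tmul a b => simp [rpsi, ← hDS, conjEquiv]


theorem IsQT.ddIdent_inverse_pt2_inverse_pt2 (hQT : IsQT F A R Ri) [FiniteDimensional F W]
    (σ : A →ₐ[F] Module.End F V) (ρW : A →ₐ[F] Module.End F W) :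
    let X := pt2 F V W (Algebra.TensorProduct.map σ ρW R)
    IsUnit X ∧ IsUnit (pt2 F V (Module.Dual F W) (Ring.inverse X)) ∧
      ddIdent F V W (Ring.inverse (pt2 F V (Module.Dual F W) (Ring.inverse X))) =
        Algebra.TensorProduct.map σ ρW (LinearMap.lTensor A (S ∘ₗ S) R) := by
  intro X
  let op : A →ₗ[F] Aᵐᵒᵖ := (MulOpposite.opLinearEquiv F).toLinearMap
  have hop : ∀ x y : A, op (x * y) = op y * op x := fun _ _ => MulOpposite.op_mul _ _
  let Φ := Algebra.TensorProduct.map σ (dualRep ρW)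
  let Ψ := Algebra.TensorProduct.map σ ρW
  let G := Algebra.TensorProduct.map (AlgHom.id F (Module.End F V))
    ((Module.evalEquiv F W).conjAlgEquiv F).toAlgHom
  have hX : X = Φ (LinearMap.lTensor A op R) := pt2_map σ ρW R
  have hXu : Φ (LinearMap.lTensor A op R) * Φ (LinearMap.lTensor A (op ∘ₗ S) R) = 1 := by
    rw [← map_mul, hQT.lTensor_mul_lTensor_antipode_eq_one op rfl hop, map_one]
  have hXu' : Φ (LinearMap.lTensor A (op ∘ₗ S) R) * Φ (LinearMap.lTensor A op R) = 1 := by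
    rw [← map_mul, hQT.lTensor_antipode_mul_lTensor_eq_one op rfl hop, map_one]
  have hY : pt2 F V (Module.Dual F W) (Ring.inverse X) = G (Ψ (LinearMap.lTensor A S R)) := by
    rw [hX, Ring.inverse_unit ⟨_, _, hXu, hXu'⟩]
    exact pt2_map_dualRep σ ρW S R
  have hYu : G (Ψ (LinearMap.lTensor A S R)) * G (Ψ (LinearMap.lTensor A (S ∘ₗ S) R)) = 1 := by
    rw [← map_mul, ← map_mul, hQT.lTensor_mul_lTensor_antipode_eq_one S HopfAlgebra.antipode_one
      HopfAlgebra.antipode_mul_antidistrib, map_one, map_one]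
  have hYu' : G (Ψ (LinearMap.lTensor A (S ∘ₗ S) R)) * G (Ψ (LinearMap.lTensor A S R)) = 1 := by
    rw [← map_mul, ← map_mul, hQT.lTensor_antipode_mul_lTensor_eq_one S HopfAlgebra.antipode_one
      HopfAlgebra.antipode_mul_antidistrib, map_one, map_one]
  refine ⟨hX ▸ ⟨⟨_, _, hXu, hXu'⟩, rfl⟩, hY ▸ ⟨⟨_, _, hYu, hYu'⟩, rfl⟩, ?_⟩
  rw [hY, Ring.inverse_unit ⟨_, _, hYu, hYu'⟩]
  exact ddIdent_map_conjAlgEquiv _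

end HopfAlgebra

theorem statement16_general {F A : Type*} [Field F] [Ring A] [HopfAlgebra F A]
    (R Ri : A ⊗[F] A) (hQT : IsQT F A R Ri)
    (D Di : A) (hD1 : D * Di = 1) (hD2 : Di * D = 1)
    (hDgl : cop F A D = D ⊗ₜ[F] D)
    (hDS : ∀ a : A, D * a * Di =
      HopfAlgebra.antipode (R := F) (HopfAlgebra.antipode (R := F) a))
    (B' : Subalgebra F A)
    (J Ji : A ⊗[F] A) (ψ : A ≃ₐ[F] A) (K' K'inv : A)
    (hcyl' : IsCylindrical F A R Ri B' J Ji ψ K' K'inv) :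
    ∀ (h1 : (D * K'inv) * (K' * Di) = 1) (h2 : (K' * Di) * (D * K'inv) = 1),
      IsBoundaryGauge F A R J ψ (D * K'inv) (K' * Di) h1 h2 := by
  intro h1 h2 V W _ _ _ _ _ _ ρV ρW
  obtain ⟨hX, hY, hRS2⟩ := hQT.ddIdent_inverse_pt2_inverse_pt2
    (ρV.comp (ψ.trans (conjEquiv F A (D * K'inv) (K' * Di) h1 h2)).toAlgHom) ρW
  refine ⟨hX, hY, ?_⟩
  rw [hcyl'.tmul_mul_mul_cop (cop_eq_tmul_of_mul_eq_one hD1 hD2 hDgl),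
    map_tmul_mul_rpsi_mul_tmul ρV ρW ψ h1 h2 hDS, hRS2]

/-- the generalized dual K-matrix `K̃ = D ⬝ (K′)⁻¹`, built from a second
cylindrical structure with the same twist pair, is a boundary gauge transformation
for `(ψ, J)`. -/
theorem statement16 {F A : Type*} [Field F] [Ring A] [HopfAlgebra F A]
    (hS : Function.Bijective (HopfAlgebra.antipode (R := F) (A := A)))
    (R Ri : A ⊗[F] A) (hQT : IsQT F A R Ri)
    (D Di : A) (hD1 : D * Di = 1) (hD2 : Di * D = 1)
    (hDgl : cop F A D = D ⊗ₜ[F] D) (hDe : Bialgebra.counitAlgHom F A D = 1)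
    (hDS : ∀ a : A, D * a * Di =
      HopfAlgebra.antipode (R := F) (HopfAlgebra.antipode (R := F) a))
    (B B' : Subalgebra F A) (hB : IsRightCoideal F A B) (hB' : IsRightCoideal F A B')
    (J Ji : A ⊗[F] A) (ψ : A ≃ₐ[F] A) (K Kinv K' K'inv : A)
    (hcyl : IsCylindrical F A R Ri B J Ji ψ K Kinv)
    (hcyl' : IsCylindrical F A R Ri B' J Ji ψ K' K'inv) :
    ∀ (h1 : (D * K'inv) * (K' * Di) = 1) (h2 : (K' * Di) * (D * K'inv) = 1),
      IsBoundaryGauge F A R J ψ (D * K'inv) (K' * Di) h1 h2 :=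
  statement16_general R Ri hQT D Di hD1 hD2 hDgl hDS B' J Ji ψ K' K'inv hcyl'

end
end

section
/- Let A be a quasitriangular bialgebra over a field F with R-matrix R and let h be a half-balance, i.e. an invertible element of A with Δ(h) = (h⊗h)·R and h² central. Then (Ad(h), 1⊗1, h) is a cylindrical structure on (A, A), where Ad(h)(a) = h·a·h⁻¹. -/
open TensorProduct

noncomputable section

variable (F : Type*) [Field F]

/- Write `c = h ⊗ h`. Quasitriangularity gives `Δ^op(h) = R Δ(h) R⁻¹ = R c`, and
`Ad(h) ⊗ Ad(h)` is conjugation by `c`. Hence conjugating `Δ^op` by `c` undoes the conjugation of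
`Δ` by `R`, which is the twist-pair condition for `(Ad(h), 1)`; flipping `Δ(h) = c R` gives the
relation with `R`; and `Δ(h) = (1 ⊗ h) (h ⊗ 1) R` is the coproduct formula for the basic K-matrix. -/

section HalfBalance

variable {F A : Type*} [Field F] [Ring A] [Bialgebra F A]

theorem tensorMap_apply_eq_conj {φ ψ : A →ₐ[F] A} {g gi k ki : A}
    (hφ : ∀ a, φ a = g * a * gi) (hψ : ∀ b, ψ b = k * b * ki) (x : A ⊗[F] A) :
    Algebra.TensorProduct.map φ ψ x = (g ⊗ₜ[F] k) * x * (gi ⊗ₜ[F] ki) := by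
  induction x using TensorProduct.induction_on with
  | zero => simp
  | tmul a b =>
    simp only [Algebra.TensorProduct.map_tmul, hφ, hψ, Algebra.TensorProduct.tmul_mul_tmul]
  | add x y hx hy => simp only [map_add, hx, hy, mul_add, add_mul]

theorem legSpan_top : legSpan F A ((⊤ : Subalgebra F A) : Set A) = ⊤ := by
  refine Submodule.eq_top_iff'.2 fun x => ?_
  induction x using TensorProduct.induction_on with
  | zero => exact Submodule.zero_mem _
  | tmul b a => exact Submodule.subset_span ⟨b, trivial, a, rfl⟩
  | add x y hx hy => exact Submodule.add_mem _ hx hy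

theorem tmul_mul_tmul_eq_one {g gi : A} (hg : g * gi = 1) :
    (g ⊗ₜ[F] g) * (gi ⊗ₜ[F] gi) = 1 := by
  rw [Algebra.TensorProduct.tmul_mul_tmul, hg, Algebra.TensorProduct.one_def]

theorem flipT_tmul_self (g : A) : flipT F A (g ⊗ₜ[F] g) = g ⊗ₜ[F] g := rfl

variable {R Ri : A ⊗[F] A} (hQT : IsQT F A R Ri) {h hi : A} (hh1 : h * hi = 1) (hh2 : hi * h = 1)
  (hΔh : cop F A h = (h ⊗ₜ[F] h) * R)
include hQT hΔh

theorem copOp_eq_of_cop_eq_tmul_mul : copOp F A h = R * (h ⊗ₜ[F] h) := by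
  rw [← hQT.intw h, hΔh, mul_assoc, mul_assoc, hQT.mulInv, mul_one]

include hh1

theorem copOp_mul_tmul_inv_eq : copOp F A h * (hi ⊗ₜ[F] hi) = R := by
  rw [copOp_eq_of_cop_eq_tmul_mul hQT hΔh, mul_assoc, tmul_mul_tmul_eq_one hh1, mul_one]

include hh2

theorem tmul_mul_copOp_inv_eq : (h ⊗ₜ[F] h) * copOp F A hi = Ri :=
  calc (h ⊗ₜ[F] h) * copOp F A hi
      = (h ⊗ₜ[F] h) * copOp F A hi * (copOp F A h * (hi ⊗ₜ[F] hi)) * Ri := by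
        rw [copOp_mul_tmul_inv_eq hQT hh1 hΔh, mul_assoc _ R, hQT.mulInv, mul_one]
    _ = (h ⊗ₜ[F] h) * copOp F A (hi * h) * (hi ⊗ₜ[F] hi) * Ri := by
        rw [map_mul]; noncomm_ring
    _ = Ri := by rw [hh2, map_one, mul_one, tmul_mul_tmul_eq_one hh1, one_mul]

theorem isTwistPair_conjEquiv_one :
    IsTwistPair F A R Ri 1 1 (conjEquiv F A h hi hh1 hh2) := by
  have hmap : ∀ x, mapT F A (conjEquiv F A h hi hh1 hh2).toAlgHom
      (conjEquiv F A h hi hh1 hh2).toAlgHom x = (h ⊗ₜ[F] h) * x * (hi ⊗ₜ[F] hi) :=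
    tensorMap_apply_eq_conj (fun _ => rfl) (fun _ => rfl)
  refine
    { mulInv := one_mul 1
      invMul := one_mul 1
      cocycle := by simp only [map_one]
      counitL := map_one _
      counitR := map_one _
      intw := fun a => ?_
      rrel := ?_ }
  · calc mapT F A _ _ (copOp F A (hi * a * h))
        = (h ⊗ₜ[F] h) * copOp F A hi * copOp F A a * (copOp F A h * (hi ⊗ₜ[F] hi)) := by
          rw [hmap, map_mul, map_mul]; noncomm_ring
      _ = Ri * (R * cop F A a * Ri) * R := by
          rw [tmul_mul_copOp_inv_eq hQT hh1 hh2 hΔh, copOp_mul_tmul_inv_eq hQT hh1 hΔh,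
            hQT.intw]
      _ = 1 * cop F A a * 1 := by
          rw [← hQT.invMul]; noncomm_ring
  · calc flipT F A (mapT F A _ _ R)
        = flipT F A (cop F A h) * (hi ⊗ₜ[F] hi) := by
          rw [hmap, hΔh, map_mul, map_mul, flipT_tmul_self, flipT_tmul_self]
      _ = flipT F A 1 * R * 1 := by
          rw [← copOp_mul_tmul_inv_eq hQT hh1 hΔh, map_one, one_mul, mul_one]; rfl

omit hQT in
theorem cop_eq_tmul_mul_rpsi_conjEquiv :
    cop F A h =
      ((1 : A) ⊗ₜ[F] h) * (rpsi F A R (conjEquiv F A h hi hh1 hh2) * (h ⊗ₜ[F] (1 : A))) := by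
  have hrpsi : rpsi F A R (conjEquiv F A h hi hh1 hh2)
      = (h ⊗ₜ[F] (1 : A)) * R * (hi ⊗ₜ[F] (1 : A)) :=
    tensorMap_apply_eq_conj (ψ := AlgHom.id F A) (fun _ => rfl) (fun _ => by simp) R
  rw [hrpsi, hΔh, mul_assoc _ (hi ⊗ₜ[F] (1 : A)), Algebra.TensorProduct.tmul_mul_tmul, hh2,
    one_mul, ← Algebra.TensorProduct.one_def, mul_one, ← mul_assoc,
    Algebra.TensorProduct.tmul_mul_tmul, one_mul, mul_one]

end HalfBalance

theorem statement18_general {F A : Type*} [Field F] [Ring A] [Bialgebra F A]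
    (R Ri : A ⊗[F] A) (hQT : IsQT F A R Ri)
    (h hi : A) (hh1 : h * hi = 1) (hh2 : hi * h = 1)
    (hΔh : cop F A h = (h ⊗ₜ[F] h) * R) :
    IsCylindrical F A R Ri ⊤ 1 1 (conjEquiv F A h hi hh1 hh2) h hi :=
  { twist := isTwistPair_conjEquiv_one hQT hh1 hh2 hΔh
    kMulInv := hh1
    kInvMul := hh2
    intwB := fun _ _ => rfl
    support := legSpan_top (F := F) (A := A) ▸ Submodule.mem_top
    copK := (cop_eq_tmul_mul_rpsi_conjEquiv hh1 hh2 hΔh).trans (one_mul _).symm }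

/-- a half-balance `h` gives the cylindrical structure `(Ad(h), 1 ⊗ 1, h)`
on `(A, A)`. -/
theorem statement18 {F A : Type*} [Field F] [Ring A] [Bialgebra F A]
    (R Ri : A ⊗[F] A) (hQT : IsQT F A R Ri)
    (h hi : A) (hh1 : h * hi = 1) (hh2 : hi * h = 1)
    (hΔh : cop F A h = (h ⊗ₜ[F] h) * R)
    (hc : ∀ a : A, h * h * a = a * (h * h)) :
    IsCylindrical F A R Ri ⊤ 1 1 (conjEquiv F A h hi hh1 hh2) h hi :=
  statement18_general R Ri hQT h hi hh1 hh2 hΔh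

end
end
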